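/- arXiv:1710.01774 — 2 statements merged into one kernel-verified Lean document; each statement's English description precedes it below -/
import Mathlib

section
/- Let X be a nonempty subset of Zar(F) such that A(X) = ⋂_{V∈X} V contains a local subring whose residue field has cardinality α, and suppose |X| < ℵ₀ · α. Then A(X) is a Prüfer domain with quotient field F. -/
open Set

/-- A subring `V` of a field `F` is a valuation ring of `F` (with quotient field `F`). -/
def IsValSubring (F : Type*) [Field F] (V : Subring F) : Prop :=
  ∀ t : F, t ≠ 0 → t ∈ V ∨ t⁻¹ ∈ V

/-- The Zariski-Riemann space of the field `F`: the set of valuation rings of `F`. -/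
def Zar (F : Type*) [Field F] : Type _ := {V : Subring F // IsValSubring F V}

/-- The patch (constructible) topology on `Zar F`, generated by the sets
`{V : x ∈ V}` and `{V : y ∉ V}` for `x, y ∈ F`. -/
instance Zar.patchTopology (F : Type*) [Field F] : TopologicalSpace (Zar F) :=
  TopologicalSpace.generateFrom
    ({S | ∃ x : F, S = {V : Zar F | x ∈ V.1}} ∪ {S | ∃ y : F, S = {V : Zar F | y ∉ V.1}})

variable {F : Type*} [Field F]

/-- The maximal ideal of a valuation ring of `F`, as a subset of `F`. -/
def mIdeal (V : Zar F) : Set F := {x : F | x ∈ V.1 ∧ (x = 0 ∨ x⁻¹ ∉ V.1)}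

/-- `A(X)`: the intersection of the valuation rings in `X`, as a subset of `F`. -/
def aSet (X : Set (Zar F)) : Set F := ⋂ V ∈ X, ((V : Zar F).1 : Set F)

/-- `A(X)` as a subring of `F`. -/
def ASub (X : Set (Zar F)) : Subring F := ⨅ V ∈ X, (V : Zar F).1

/-- `J(X)`: the intersection of the maximal ideals of the valuation rings in `X`. -/
def jSet (X : Set (Zar F)) : Set F := ⋂ V ∈ X, mIdeal V

/-- The set of limit points of `X` in the patch topology of `Zar F`. -/
def limPts (X : Set (Zar F)) : Set (Zar F) :=
  {V : Zar F | ∀ U : Set (Zar F), IsOpen U → V ∈ U → ∃ W ∈ X, W ≠ V ∧ W ∈ U}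


/-- A subset `A` of `F` has quotient field `F` if every element of `F` is a quotient
of elements of `A`. -/
def HasQFSet (A : Set F) : Prop := ∀ x : F, ∃ a ∈ A, ∃ b ∈ A, b ≠ 0 ∧ x = a / b

/-- The localization of the subring `A` of `F` at the ideal `M`, realized inside `F`. -/
def locSet (A : Subring F) (M : Ideal A) : Set F :=
  {x : F | ∃ a b : A, b ∉ M ∧ (b : F) ≠ 0 ∧ x = (a : F) / (b : F)}

/-- `A` is a Prüfer domain with quotient field `F`: `F` is the quotient field of `A` and
the localization of `A` at each maximal ideal is a valuation ring of `F`. -/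
def IsPruferOf (A : Subring F) : Prop :=
  HasQFSet (A : Set F) ∧ ∀ M : Ideal A, M.IsMaximal →
    ∀ t : F, t ≠ 0 → t ∈ locSet A M ∨ t⁻¹ ∈ locSet A M

/-!
By Gilmer's criterion, a subring `A` of `F` is a Prüfer domain with quotient field `F` as soon as
every `t ≠ 0` admits `u ∈ A` with `u t ∈ A` and `(1 - u) t⁻¹ ∈ A`. For `A = A(X)` we take
`u = (1 + s)⁻¹`. In a valuation ring `V ∈ X` in which `t` is not a unit this works whenever `s`
has the right valuation; if `t` is a unit of `V` it works exactly when `1 + s` is not in the maximal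
ideal of `V`. So it suffices to have more candidates `s` than elements of `X`, each `V` rejecting
at most one of them.

For finite `X` the candidates are the iterates of `s ↦ s² / (1 + s)` on `t`: once `1 + s` lies in
the maximal ideal of `V`, the next iterate and all later ones have valuation `> 1`. For infinite
`X`, the residue field of the local subring `B ⊆ A(X)` has more than `|X|` units, and the
candidates are `c t` with `c` running over lifts of these units to `B`; `V` rejects `c t` only
for `c` in one residue class.
-/

open Cardinal

universe u w

def IsPruferWitness (S : Subring F) (t u : F) : Prop :=
  u ∈ S ∧ u * t ∈ S ∧ (1 - u) * t⁻¹ ∈ S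

lemma mem_locSet_of_mul_mem {A : Subring F} {M : Ideal A} {b : A} (hb : b ∉ M) {x : F}
    (hbx : (b : F) * x ∈ A) : x ∈ locSet A M := by
  have hb0 : (b : F) ≠ 0 := fun h => hb (by rw [show b = 0 from Subtype.ext h]; exact M.zero_mem)
  exact ⟨⟨_, hbx⟩, b, hb, hb0, (mul_div_cancel_left₀ x hb0).symm⟩

lemma hasQFSet_of_forall_exists_isPruferWitness {A : Subring F}
    (h : ∀ t : F, t ≠ 0 → ∃ u, IsPruferWitness A t u) : HasQFSet (A : Set F) := by
  intro x
  rcases eq_or_ne x 0 with rfl | hx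
  · exact ⟨0, A.zero_mem, 1, A.one_mem, one_ne_zero, by simp⟩
  obtain ⟨u, hu, hux, hu'⟩ := h x hx
  rcases eq_or_ne u 0 with rfl | hu0
  · exact ⟨1, A.one_mem, x⁻¹, by simpa using hu', inv_ne_zero hx, by rw [one_div, inv_inv]⟩
  · exact ⟨u * x, hux, u, hu, hu0, (mul_div_cancel_left₀ x hu0).symm⟩

lemma isPruferOf_of_forall_exists_isPruferWitness {A : Subring F}
    (h : ∀ t : F, t ≠ 0 → ∃ u, IsPruferWitness A t u) : IsPruferOf A := by
  refine ⟨hasQFSet_of_forall_exists_isPruferWitness h, fun M hM t ht => ?_⟩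
  obtain ⟨u, hu, hut, hu'⟩ := h t ht
  by_cases huM : (⟨u, hu⟩ : A) ∈ M
  · have hsum : (⟨u, hu⟩ : A) + ⟨1 - u, A.sub_mem A.one_mem hu⟩ = 1 :=
      Subtype.ext (add_sub_cancel u 1)
    have h1u : (⟨1 - u, A.sub_mem A.one_mem hu⟩ : A) ∉ M := fun h1u =>
      hM.ne_top (M.eq_top_of_isUnit_mem (hsum ▸ M.add_mem huM h1u) isUnit_one)
    exact Or.inr (mem_locSet_of_mul_mem h1u hu')
  · exact Or.inl (mem_locSet_of_mul_mem huM hut)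

lemma mem_ASub {X : Set (Zar F)} {x : F} : x ∈ ASub X ↔ ∀ V ∈ X, x ∈ V.1 := by
  simp [ASub, Subring.mem_iInf]

lemma mem_aSet {X : Set (Zar F)} {x : F} : x ∈ aSet X ↔ ∀ V ∈ X, x ∈ V.1 := by
  simp [aSet]

lemma isPruferWitness_ASub_iff {X : Set (Zar F)} {t u : F} :
    IsPruferWitness (ASub X) t u ↔ ∀ V ∈ X, IsPruferWitness V.1 t u := by
  simp only [IsPruferWitness, mem_ASub, forall_and]

def Zar.toValuationSubring (V : Zar F) : ValuationSubring F where
  toSubring := V.1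
  mem_or_inv_mem' x := by
    rcases eq_or_ne x 0 with rfl | hx
    · exact Or.inl V.1.zero_mem
    · exact V.2 x hx

def pruferStep (s : F) : F := s ^ 2 / (1 + s)

section pruferStep

variable {Γ₀ : Type*} [LinearOrderedCommGroupWithZero Γ₀] (v : Valuation F Γ₀) {s : F}

lemma Valuation.map_pruferStep : v (pruferStep s) = v s ^ 2 / v (1 + s) := by
  simp [pruferStep]

lemma Valuation.map_one_add_of_one_lt (h : 1 < v s) : v (1 + s) = v s :=
  v.map_add_eq_of_lt_right (by rwa [v.map_one])

lemma Valuation.map_pruferStep_of_one_lt (h : 1 < v s) : v (pruferStep s) = v s := by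
  rw [v.map_pruferStep, v.map_one_add_of_one_lt h, sq, mul_div_assoc,
    div_self (zero_lt_one.trans h).ne', mul_one]

lemma Valuation.map_pruferStep_le_of_lt_one (h : v s < 1) : v (pruferStep s) ≤ v s := by
  rw [v.map_pruferStep, v.map_one_add_of_lt h, div_one, sq]
  exact mul_le_of_le_one_left' h.le

lemma Valuation.one_lt_map_pruferStep (h : v (1 + s) < 1) (hs : 1 + s ≠ 0) :
    1 < v (pruferStep s) := by
  have hvs : v s = 1 := by
    simpa using v.map_sub_eq_of_lt_right (x := 1 + s) (y := 1) (by rwa [v.map_one])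
  rw [v.map_pruferStep, hvs, one_pow, one_div]
  exact (one_lt_inv₀ (v.pos_iff.mpr hs)).mpr h

lemma Valuation.map_iterate_pruferStep_of_one_lt (h : 1 < v s) (n : ℕ) :
    v (pruferStep^[n] s) = v s := by
  induction n with
  | zero => rfl
  | succ n ih =>
    rw [Function.iterate_succ_apply', v.map_pruferStep_of_one_lt (ih ▸ h), ih]

lemma Valuation.map_iterate_pruferStep_le_of_lt_one (h : v s < 1) (n : ℕ) :
    v (pruferStep^[n] s) ≤ v s := by
  induction n with
  | zero => rfl
  | succ n ih =>
    rw [Function.iterate_succ_apply']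
    exact (v.map_pruferStep_le_of_lt_one (ih.trans_lt h)).trans ih

end pruferStep

namespace ValuationSubring

variable (V : ValuationSubring F) {t s u : F}

lemma valuation_lt_one_of_inv_notMem (h : s⁻¹ ∉ V) : V.valuation s < 1 ∧ s ≠ 0 := by
  have hs : s ≠ 0 := by rintro rfl; exact h (by rw [inv_zero]; exact V.zero_mem)
  refine ⟨?_, hs⟩
  rw [← V.valuation_le_one_iff, map_inv₀, inv_le_one₀ (V.valuation.pos_iff.mpr hs)] at h
  exact not_le.mp h

lemma one_add_inv_mem_of_one_lt_valuation (h : 1 < V.valuation s) : (1 + s)⁻¹ ∈ V := by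
  rw [← V.valuation_le_one_iff, map_inv₀, V.valuation.map_one_add_of_one_lt h]
  exact inv_le_one_of_one_le₀ h.le

lemma isPruferWitness_of_one_lt_valuation (ht : 1 < V.valuation t)
    (hs : V.valuation t ≤ V.valuation s) : IsPruferWitness V.toSubring t (1 + s)⁻¹ := by
  have hs1 : 1 < V.valuation s := ht.trans_le hs
  have hu : (1 + s)⁻¹ ∈ V := V.one_add_inv_mem_of_one_lt_valuation hs1
  have hti : t⁻¹ ∈ V := by
    rw [← V.valuation_le_one_iff, map_inv₀]
    exact inv_le_one_of_one_le₀ ht.le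
  refine ⟨hu, ?_, MulMemClass.mul_mem (sub_mem (one_mem V) hu) hti⟩
  rw [mem_toSubring, ← V.valuation_le_one_iff, map_mul, map_inv₀,
    V.valuation.map_one_add_of_one_lt hs1]
  exact inv_mul_le_one_of_le₀ hs zero_le

lemma isPruferWitness_of_valuation_lt_one (ht : V.valuation t < 1)
    (hs : V.valuation s ≤ V.valuation t) : IsPruferWitness V.toSubring t (1 + s)⁻¹ := by
  have h1s : V.valuation (1 + s) = 1 := V.valuation.map_one_add_of_lt (hs.trans_lt ht)
  have hne : 1 + s ≠ 0 := by
    intro h; rw [h, map_zero] at h1s; exact zero_ne_one h1s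
  have hsub : (1 - (1 + s)⁻¹) * t⁻¹ = s * t⁻¹ * (1 + s)⁻¹ := by field_simp; ring
  refine ⟨?_, ?_, ?_⟩ <;> rw [mem_toSubring, ← V.valuation_le_one_iff]
  · rw [map_inv₀, h1s, inv_one]
  · rw [map_mul, map_inv₀, h1s, inv_one, one_mul]; exact ht.le
  · rw [hsub, map_mul, map_mul, map_inv₀, map_inv₀, h1s, inv_one, mul_one]
    exact mul_inv_le_one_of_le₀ hs zero_le

lemma isPruferWitness_iff_of_valuation_eq_one (ht : V.valuation t = 1) :
    IsPruferWitness V.toSubring t u ↔ u ∈ V := by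
  have htV : t ∈ V := (V.valuation_le_one_iff t).mp ht.le
  have htiV : t⁻¹ ∈ V := (V.valuation_le_one_iff _).mp (by rw [map_inv₀, ht, inv_one])
  exact ⟨fun h => h.1, fun hu =>
    ⟨hu, MulMemClass.mul_mem hu htV, MulMemClass.mul_mem (sub_mem (one_mem V) hu) htiV⟩⟩

lemma setOf_not_isPruferWitness_iterate_pruferStep_subsingleton (t : F) :
    {n : ℕ | ¬IsPruferWitness V.toSubring t (1 + pruferStep^[n] t)⁻¹}.Subsingleton := by
  rcases lt_trichotomy (V.valuation t) 1 with ht | ht | ht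
  · intro m hm
    exact absurd (V.isPruferWitness_of_valuation_lt_one ht
      (V.valuation.map_iterate_pruferStep_le_of_lt_one ht m)) hm
  · simp only [V.isPruferWitness_iff_of_valuation_eq_one ht]
    have key : ∀ m n, m < n →
        (1 + pruferStep^[m] t)⁻¹ ∉ V → (1 + pruferStep^[n] t)⁻¹ ∈ V := by
      intro m n hmn hm
      obtain ⟨hlt, hne⟩ := V.valuation_lt_one_of_inv_notMem hm
      have hstep := V.valuation.one_lt_map_pruferStep hlt hne
      obtain ⟨k, rfl⟩ := Nat.exists_eq_add_of_lt hmn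
      apply V.one_add_inv_mem_of_one_lt_valuation
      rwa [show m + k + 1 = k + (m + 1) by omega, Function.iterate_add_apply,
        Function.iterate_succ_apply', V.valuation.map_iterate_pruferStep_of_one_lt hstep]
    intro m hm n hn
    rcases lt_trichotomy m n with hmn | rfl | hnm
    · exact absurd (key m n hmn hm) hn
    · rfl
    · exact absurd (key n m hnm hn) hm
  · intro m hm
    exact absurd (V.isPruferWitness_of_one_lt_valuation ht
      (V.valuation.map_iterate_pruferStep_of_one_lt ht m).ge) hm

lemma setOf_not_isPruferWitness_one_add_mul_subsingleton {ι : Type*} {c : ι → F}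
    (hc : ∀ i, V.valuation (c i) = 1) (hcc : Pairwise fun i j => V.valuation (c i - c j) = 1)
    (t : F) : {i | ¬IsPruferWitness V.toSubring t (1 + c i * t)⁻¹}.Subsingleton := by
  have hct : ∀ i, V.valuation (c i * t) = V.valuation t := fun i => by rw [map_mul, hc, one_mul]
  rcases lt_trichotomy (V.valuation t) 1 with ht | ht | ht
  · intro i hi
    exact absurd (V.isPruferWitness_of_valuation_lt_one ht (hct i).le) hi
  · simp only [V.isPruferWitness_iff_of_valuation_eq_one ht]
    intro i hi j hj
    by_contra hij
    have hlt : V.valuation ((1 + c i * t) - (1 + c j * t)) < 1 :=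
      (V.valuation.map_sub _ _).trans_lt (max_lt (V.valuation_lt_one_of_inv_notMem hi).1
        (V.valuation_lt_one_of_inv_notMem hj).1)
    rw [show (1 + c i * t) - (1 + c j * t) = (c i - c j) * t by ring, map_mul, hcc hij, ht,
      one_mul] at hlt
    exact lt_irrefl _ hlt
  · intro i hi
    exact absurd (V.isPruferWitness_of_one_lt_valuation ht (hct i).ge) hi

lemma valuation_eq_one_of_isUnit {B : Subring F} (hB : B ≤ V.toSubring) {b : B} (hb : IsUnit b) :
    V.valuation b = 1 :=
  (V.valuation_eq_one_iff ⟨b, hB b.2⟩).mp (hb.map (Subring.inclusion hB))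

end ValuationSubring

theorem exists_forall_not_of_lift_mk_lt {α : Type u} {ι : Type w} {S : Set α}
    {P : α → ι → Prop} (hP : ∀ a ∈ S, {i | P a i}.Subsingleton)
    (h : lift.{w} #S < lift.{u} #ι) : ∃ i, ∀ a ∈ S, ¬P a i := by
  by_contra! hcon
  choose f hfS hfP using hcon
  have hinj : Function.Injective fun i => (⟨f i, hfS i⟩ : S) := fun i j hij => by
    have hf : f i = f j := congrArg Subtype.val hij
    exact hP (f j) (hfS j) (hf ▸ hfP i) (hfP j)
  exact (lift_mk_le_lift_mk_of_injective hinj).not_gt h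

theorem exists_isPruferWitness_ASub {X : Set (Zar F)} {ι : Type w} (s : ι → F) (t : F)
    (hs : ∀ V ∈ X, {i | ¬IsPruferWitness V.1 t (1 + s i)⁻¹}.Subsingleton)
    (hX : lift.{w} #X < lift #ι) : ∃ u, IsPruferWitness (ASub X) t u := by
  obtain ⟨i, hi⟩ := exists_forall_not_of_lift_mk_lt hs hX
  exact ⟨_, isPruferWitness_ASub_iff.mpr fun V hV => not_not.mp (hi V hV)⟩

theorem exists_isPruferWitness_ASub_of_finite {X : Set (Zar F)} (hX : X.Finite) (t : F) :
    ∃ u, IsPruferWitness (ASub X) t u :=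
  exists_isPruferWitness_ASub (fun n : ℕ => pruferStep^[n] t) t
    (fun V _ => V.toValuationSubring.setOf_not_isPruferWitness_iterate_pruferStep_subsingleton t)
    (by simpa using hX.lt_aleph0)

theorem exists_isPruferWitness_ASub_of_mk_lt_units {X : Set (Zar F)} {B : Subring F}
    [IsLocalRing B] (hB : (B : Set F) ⊆ aSet X)
    (hX : #X < #(IsLocalRing.ResidueField B)ˣ) (t : F) : ∃ u, IsPruferWitness (ASub X) t u := by
  let c : (IsLocalRing.ResidueField B)ˣ → B :=
    fun r => Function.surjInv IsLocalRing.residue_surjective (r : IsLocalRing.ResidueField B)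
  have hc : ∀ r, IsLocalRing.residue B (c r) = r := fun r =>
    Function.surjInv_eq IsLocalRing.residue_surjective _
  refine exists_isPruferWitness_ASub (fun r => (c r : F) * t) t (fun V hV => ?_) (by simpa using hX)
  have hBV : B ≤ V.toValuationSubring.toSubring := fun x hx => mem_aSet.mp (hB hx) V hV
  refine V.toValuationSubring.setOf_not_isPruferWitness_one_add_mul_subsingleton
    (fun r => V.toValuationSubring.valuation_eq_one_of_isUnit hBV ?_)
    (fun r r' hrr' => V.toValuationSubring.valuation_eq_one_of_isUnit hBV (b := c r - c r') ?_) t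
  · rw [← IsLocalRing.residue_ne_zero_iff_isUnit, hc]
    exact r.ne_zero
  · rw [← IsLocalRing.residue_ne_zero_iff_isUnit, map_sub, hc, hc, sub_ne_zero]
    exact fun h => hrr' (Units.ext h)

theorem Cardinal.mk_units_of_infinite (K : Type u) [GroupWithZero K] [Infinite K] :
    #Kˣ = #K := by
  rw [mk_congr unitsEquivNeZero]
  exact mk_compl_of_infinite {0} (by simpa using one_lt_aleph0.trans_le (aleph0_le_mk K))

theorem Cardinal.lt_of_aleph0_le_of_lt_aleph0_mul {a b : Cardinal} (ha : ℵ₀ ≤ a)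
    (h : a < ℵ₀ * b) : a < b :=
  (lt_max_iff.mp (h.trans_le (mul_le_max_of_aleph0_le_left le_rfl))).resolve_left ha.not_gt

theorem stmt17_general (X : Set (Zar F)) (α : Cardinal)
    (h : ∃ B : Subring F, (B : Set F) ⊆ aSet X ∧
      ∃ hB : IsLocalRing B, Cardinal.mk (@IsLocalRing.ResidueField B _ hB) = α)
    (hcard : Cardinal.mk X < Cardinal.aleph0 * α) :
    IsPruferOf (ASub X) := by
  obtain ⟨B, hBX, hB, rfl⟩ := h
  refine isPruferOf_of_forall_exists_isPruferWitness fun t _ => ?_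
  rcases X.finite_or_infinite with hfin | hinf
  · exact exists_isPruferWitness_ASub_of_finite hfin t
  · have hX : ℵ₀ ≤ #X := infinite_iff.mp hinf.to_subtype
    have hXk := lt_of_aleph0_le_of_lt_aleph0_mul hX hcard
    have : Infinite (IsLocalRing.ResidueField B) := infinite_iff.mpr (hX.trans hXk.le)
    exact exists_isPruferWitness_ASub_of_mk_lt_units hBX (by rwa [mk_units_of_infinite]) t

theorem stmt17 (X : Set (Zar F)) (hX : X.Nonempty) (α : Cardinal)
    (h : ∃ B : Subring F, (B : Set F) ⊆ aSet X ∧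
      ∃ hB : IsLocalRing B, Cardinal.mk (@IsLocalRing.ResidueField B _ hB) = α)
    (hcard : Cardinal.mk X < Cardinal.aleph0 * α) :
    IsPruferOf (ASub X) :=
  stmt17_general X α h hcard
end

section
/- Let A be a Prüfer domain with quotient field F whose Jacobson radical is nonzero, such that all but finitely many maximal ideals of A have height one and are the radical of a finitely generated ideal. Then there exists X ⊆ Zar(F) with A = ⋂_{V∈X} V, J(X) = ⋂_{V∈X} 𝔪_V ≠ 0, all but finitely many members of X of rank one, and such that the set of minimal elements (under inclusion) of the set of patch limit points of X is finite. -/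
open Set

variable {F : Type*} [Field F]

/-- A valuation ring of `F` has rank one iff it is a maximal proper valuation subring of `F`. -/
def RankOne (V : Zar F) : Prop :=
  V.1 ≠ ⊤ ∧ ∀ W : Zar F, V.1 ≤ W.1 → W.1 ≠ ⊤ → W.1 = V.1

/-!
Take `X = {A_M : M maximal}`. A valuation overring `W` of the Prüfer domain `A` is the
localization of `A` at its centre `𝔪_W ∩ A`, so `A_M` has rank one whenever `M` has height one.
A patch limit point `V` of `X` lies in the patch closure of `X`, and the sets `{W | a ∈ W}` and
`{W | a ∈ 𝔪_W}` are clopen; hence `A ⊆ V` and the centre of `V` contains a nonzero element of the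
Jacobson radical. If a maximal ideal `M` containing this centre had height one, the centre would be
`M`; if moreover `M = √(a₁, …, aₙ)`, the patch-open set `{W | a₁, …, aₙ ∈ 𝔪_W}` would contain `V`
but meet `X` only in `A_M`, so `V` would not be a limit point. Thus every limit point contains
`A_M` for one of the finitely many exceptional `M`, and since the valuation rings containing `A_M`
form a chain, at most one minimal limit point contains a given `A_M`.
-/

open Filter Topology

namespace Zar

def toValuationSubring_s19 (V : Zar F) : ValuationSubring F :=
  ValuationSubring.ofSubring V.1 fun x => by
    rcases eq_or_ne x 0 with rfl | hx
    · exact Or.inl V.1.zero_mem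
    · exact V.2 x hx

@[simp]
lemma mem_toValuationSubring {V : Zar F} {x : F} : x ∈ V.toValuationSubring_s19 ↔ x ∈ V.1 :=
  Iff.rfl

lemma mIdeal_eq_nonunits (V : Zar F) : mIdeal V = V.toValuationSubring_s19.nonunits := by
  ext x
  rw [SetLike.mem_coe, ValuationSubring.mem_nonunits_iff_or, mem_toValuationSubring]
  refine ⟨And.right, fun h => ⟨?_, h⟩⟩
  rcases h with rfl | h
  · exact V.1.zero_mem
  · exact (V.toValuationSubring_s19.mem_or_inv_mem x).resolve_right h

lemma isClopen_setOf_mem (x : F) : IsClopen {V : Zar F | x ∈ V.1} :=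
  ⟨isOpen_compl_iff.mp (TopologicalSpace.GenerateOpen.basic _ (Or.inr ⟨x, rfl⟩)),
    TopologicalSpace.GenerateOpen.basic _ (Or.inl ⟨x, rfl⟩)⟩

lemma isClopen_setOf_mem_mIdeal (x : F) : IsClopen {V : Zar F | x ∈ mIdeal V} := by
  rcases eq_or_ne x 0 with rfl | hx
  · convert isClopen_univ
    simp [mIdeal]
  · have : {V : Zar F | x ∈ mIdeal V} = {V | x ∈ V.1} ∩ {V | x⁻¹ ∈ V.1}ᶜ := by
      ext V
      simp [mIdeal, hx]
    rw [this]
    exact (isClopen_setOf_mem x).inter (isClopen_setOf_mem x⁻¹).compl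

lemma le_total_of_le {B V W : Zar F} (hV : B.1 ≤ V.1) (hW : B.1 ≤ W.1) :
    V.1 ≤ W.1 ∨ W.1 ≤ V.1 :=
  le_total (⟨V.toValuationSubring_s19, hV⟩ : {S // B.toValuationSubring_s19 ≤ S})
    ⟨W.toValuationSubring_s19, hW⟩

lemma subsingleton_minimal_inter_le (S : Set (Zar F)) (B : Zar F) :
    ({V ∈ S | ∀ W ∈ S, W.1 ≤ V.1 → W = V} ∩ {V | B.1 ≤ V.1}).Subsingleton := by
  rintro V₁ ⟨⟨hV₁, hmin₁⟩, hB₁⟩ V₂ ⟨⟨hV₂, hmin₂⟩, hB₂⟩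
  rcases le_total_of_le hB₁ hB₂ with h | h
  exacts [hmin₂ V₁ hV₁ h, (hmin₁ V₂ hV₂ h).symm]

instance : T1Space (Zar F) := by
  refine t1Space_iff_exists_open.mpr fun V W hne => ?_
  by_cases hVW : V.1 ≤ W.1
  · obtain ⟨t, htW, htV⟩ := SetLike.exists_of_lt (lt_of_le_of_ne hVW fun h => hne (Subtype.ext h))
    exact ⟨{U | t ∈ U.1}ᶜ, (isClopen_setOf_mem t).isClosed.isOpen_compl, htV, not_not.mpr htW⟩
  · obtain ⟨t, htV, htW⟩ := SetLike.not_le_iff_exists.mp hVW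
    exact ⟨{U | t ∈ U.1}, (isClopen_setOf_mem t).isOpen, htV, htW⟩

end Zar

section LimitPoints

variable {X : Set (Zar F)} {V : Zar F}

lemma mem_limPts_iff_accPt : V ∈ limPts X ↔ AccPt V (𝓟 X) := by
  rw [accPt_iff_nhds]
  constructor
  · intro h U hU
    obtain ⟨O, hOU, hO, hVO⟩ := mem_nhds_iff.mp hU
    obtain ⟨W, hWX, hne, hWO⟩ := h O hO hVO
    exact ⟨W, ⟨hOU hWO, hWX⟩, hne⟩
  · intro h U hU hVU
    obtain ⟨W, ⟨hWU, hWX⟩, hne⟩ := h U (hU.mem_nhds hVU)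
    exact ⟨W, hWX, hne, hWU⟩

lemma limPts_subset_closure : limPts X ⊆ closure X := fun _ hV =>
  mem_closure_iff_clusterPt.mpr (mem_limPts_iff_accPt.mp hV).clusterPt

lemma notMem_limPts_of_isOpen {U : Set (Zar F)} (hU : IsOpen U) (hVU : V ∈ U)
    (hfin : (U ∩ X).Finite) : V ∉ limPts X := fun hV =>
  (Set.Infinite.of_accPt ((mem_limPts_iff_accPt.mp hV).nhds_inter (hU.mem_nhds hVU))) hfin

end LimitPoints

namespace ValuationSubring

def centerOn (W : ValuationSubring F) (A : Subring F) (hAW : A ≤ W.toSubring) : Ideal A :=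
  (IsLocalRing.maximalIdeal W).comap (A.subtype.codRestrict W fun a => hAW a.2)

variable {A : Subring F}

instance isPrime_centerOn (W : ValuationSubring F) (hAW : A ≤ W.toSubring) :
    (W.centerOn A hAW).IsPrime :=
  Ideal.comap_isPrime _ _

lemma mem_centerOn {W : ValuationSubring F} {hAW : A ≤ W.toSubring} {b : A} :
    b ∈ W.centerOn A hAW ↔ (b : F) ∈ W.nonunits :=
  coe_mem_nonunits_iff.symm

lemma centerOn_anti {V W : ValuationSubring F} (hAV : A ≤ V.toSubring) (hVW : V ≤ W) :
    W.centerOn A (hAV.trans hVW) ≤ V.centerOn A hAV := fun _ hb =>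
  mem_centerOn.mpr (nonunits_le_nonunits.mpr hVW (mem_centerOn.mp hb))

lemma inv_mem_of_notMem_centerOn {W : ValuationSubring F} {hAW : A ≤ W.toSubring} {b : A}
    (hb : b ∉ W.centerOn A hAW) : (b : F)⁻¹ ∈ W := by
  rw [mem_centerOn, mem_nonunits_iff_or, not_or, not_not] at hb
  exact hb.2

end ValuationSubring

section Localization

variable {A : Subring F} {P Q : Ideal A}

lemma coe_mem_locSet (hP : P ≠ ⊤) (a : A) : (a : F) ∈ locSet A P :=
  ⟨a, 1, fun h => hP ((Ideal.eq_top_iff_one P).mpr h), one_ne_zero, by simp⟩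

lemma inv_mem_locSet {b : A} (hb : b ∉ P) (hb0 : (b : F) ≠ 0) : (b : F)⁻¹ ∈ locSet A P :=
  ⟨1, b, hb, hb0, by simp⟩

lemma inv_notMem_locSet {b : A} (hb : b ∈ P) (hb0 : (b : F) ≠ 0) : (b : F)⁻¹ ∉ locSet A P := by
  rintro ⟨a, c, hc, hc0, heq⟩
  have : c = a * b := Subtype.ext (by field_simp at heq; push_cast; linear_combination heq)
  exact hc (this ▸ P.mul_mem_left a hb)

lemma locSet_anti (hPQ : P ≤ Q) : locSet A Q ⊆ locSet A P :=
  fun _ ⟨a, b, hb, hb0, heq⟩ => ⟨a, b, fun h => hb (hPQ h), hb0, heq⟩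

lemma locSet_bot (hA : HasQFSet (A : Set F)) : locSet A ⊥ = univ :=
  eq_univ_of_forall fun x => by
    obtain ⟨a, ha, b, hb, hb0, rfl⟩ := hA x
    exact ⟨⟨a, ha⟩, ⟨b, hb⟩, fun h => hb0 (congrArg Subtype.val ((Submodule.mem_bot A).mp h)),
      hb0, rfl⟩

def locSub (A : Subring F) (P : Ideal A) [hP : P.IsPrime] : Subring F where
  carrier := locSet A P
  zero_mem' := by simpa using coe_mem_locSet hP.ne_top 0
  one_mem' := by simpa using coe_mem_locSet hP.ne_top 1
  add_mem' := by
    rintro x y ⟨a, b, hb, hb0, rfl⟩ ⟨c, d, hd, hd0, rfl⟩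
    refine ⟨a * d + c * b, b * d, hP.mul_notMem hb hd, by push_cast; exact mul_ne_zero hb0 hd0, ?_⟩
    push_cast
    field_simp
  mul_mem' := by
    rintro x y ⟨a, b, hb, hb0, rfl⟩ ⟨c, d, hd, hd0, rfl⟩
    refine ⟨a * c, b * d, hP.mul_notMem hb hd, by push_cast; exact mul_ne_zero hb0 hd0, ?_⟩
    push_cast
    field_simp
  neg_mem' := by
    rintro x ⟨a, b, hb, hb0, rfl⟩
    exact ⟨-a, b, hb, hb0, by push_cast; ring⟩

lemma le_locSub [P.IsPrime] : A ≤ locSub A P := fun a ha =>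
  coe_mem_locSet Ideal.IsPrime.ne_top' ⟨a, ha⟩

def denomIdeal (A : Subring F) (t : F) : Ideal A where
  carrier := {b : A | (b : F) * t ∈ A}
  zero_mem' := by simp [A.zero_mem]
  add_mem' := fun {a b} ha hb => by
    simpa only [Set.mem_ofPred_eq, Subring.coe_add, add_mul] using A.add_mem ha hb
  smul_mem' := fun c b hb => by
    simpa only [Set.mem_ofPred_eq, smul_eq_mul, Subring.coe_mul, mul_assoc] using A.mul_mem c.2 hb

lemma coe_eq_iInter_locSet (A : Subring F) :
    (A : Set F) = ⋂ (M : Ideal A) (_ : M.IsMaximal), locSet A M := by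
  refine Subset.antisymm (fun t ht => mem_iInter₂.mpr fun M hM =>
    coe_mem_locSet hM.ne_top ⟨t, ht⟩) fun t ht => ?_
  by_contra htA
  have hden : denomIdeal A t ≠ ⊤ := fun h => htA <| by
    simpa [denomIdeal] using (Ideal.eq_top_iff_one _).mp h
  obtain ⟨M, hM, hle⟩ := Ideal.exists_le_maximal _ hden
  obtain ⟨a, b, hbM, hb0, rfl⟩ := mem_iInter₂.mp ht M hM
  exact hbM (hle (show (b : F) * (a / b) ∈ A by rw [mul_div_cancel₀ _ hb0]; exact a.2))

lemma locSet_centerOn_subset (W : ValuationSubring F) (hAW : A ≤ W.toSubring) :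
    locSet A (W.centerOn A hAW) ⊆ W := by
  rintro _ ⟨a, b, hb, -, rfl⟩
  rw [div_eq_mul_inv]
  exact W.mul_mem _ _ (hAW a.2) (ValuationSubring.inv_mem_of_notMem_centerOn hb)

end Localization

namespace IsPruferOf

variable {A : Subring F}

lemma isValSubring_locSub (hA : IsPruferOf A) (P : Ideal A) [hP : P.IsPrime] :
    IsValSubring F (locSub A P) := by
  intro t ht
  obtain ⟨M, hM, hPM⟩ := Ideal.exists_le_maximal P hP.ne_top
  exact (hA.2 M hM t ht).imp (fun h => locSet_anti hPM h) (fun h => locSet_anti hPM h)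

def locZar (hA : IsPruferOf A) (P : Ideal A) [P.IsPrime] : Zar F :=
  ⟨locSub A P, hA.isValSubring_locSub P⟩

lemma le_locZar (hA : IsPruferOf A) (P : Ideal A) [P.IsPrime] :
    A ≤ (hA.locZar P).toValuationSubring_s19.toSubring :=
  le_locSub

lemma centerOn_locZar (hA : IsPruferOf A) (P : Ideal A) [P.IsPrime] :
    (hA.locZar P).toValuationSubring_s19.centerOn A (hA.le_locZar P) = P := by
  ext b
  rw [ValuationSubring.mem_centerOn, ValuationSubring.mem_nonunits_iff_or]
  by_cases hb0 : (b : F) = 0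
  · simp [show b = 0 from Subtype.ext hb0]
  · rw [or_iff_right hb0]
    exact ⟨fun h => by_contra fun hb => h (inv_mem_locSet hb hb0),
      fun hb => inv_notMem_locSet hb hb0⟩

lemma coe_mem_mIdeal_locZar_iff (hA : IsPruferOf A) (P : Ideal A) [P.IsPrime] (b : A) :
    (b : F) ∈ mIdeal (hA.locZar P) ↔ b ∈ P := by
  rw [Zar.mIdeal_eq_nonunits, SetLike.mem_coe,
    ← ValuationSubring.mem_centerOn (hAW := hA.le_locZar P), centerOn_locZar]

lemma locSet_centerOn (hA : IsPruferOf A) (W : ValuationSubring F) (hAW : A ≤ W.toSubring) :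
    locSet A (W.centerOn A hAW) = W := by
  refine Subset.antisymm (locSet_centerOn_subset W hAW) fun t ht => ?_
  by_contra htP
  have ht0 : t ≠ 0 := by
    rintro rfl
    exact htP (locSub A (W.centerOn A hAW)).zero_mem
  obtain ⟨a, b, hb, hb0, hab⟩ := (hA.isValSubring_locSub _ t ht0).resolve_left htP
  have ha0 : (a : F) ≠ 0 := by
    rintro h
    rw [h, zero_div, inv_eq_zero] at hab
    exact ht0 hab
  by_cases ha : a ∈ W.centerOn A hAW
  · have hainv : (a : F)⁻¹ = t * (b : F)⁻¹ := by
      rw [← inv_inv t, hab]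
      field_simp
    refine ((W.mem_nonunits_iff_or.mp (ValuationSubring.mem_centerOn.mp ha)).resolve_left ha0) ?_
    rw [hainv]
    exact W.mul_mem _ _ ht (ValuationSubring.inv_mem_of_notMem_centerOn hb)
  · exact htP ⟨b, a, ha, ha0, by rw [← inv_inv t, hab, inv_div]⟩

lemma rankOne_locZar (hA : IsPruferOf A) (M : Ideal A) [M.IsMaximal] (hne : M ≠ ⊥)
    (hht : ∀ P : Ideal A, P.IsPrime → P < M → P = ⊥) : RankOne (hA.locZar M) := by
  refine ⟨fun htop => ?_, fun W hle hWtop => ?_⟩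
  · obtain ⟨a, haM, ha0⟩ := Submodule.exists_mem_ne_zero_of_ne_bot hne
    have ha0' : (a : F) ≠ 0 := fun h => ha0 (Subtype.ext h)
    have : (a : F)⁻¹ ∈ (hA.locZar M).1 := htop ▸ Subring.mem_top _
    exact inv_notMem_locSet haM ha0' this
  · have hAW : A ≤ W.toValuationSubring_s19.toSubring := (hA.le_locZar M).trans hle
    have hPM : W.toValuationSubring_s19.centerOn A hAW ≤ M :=
      hA.centerOn_locZar M ▸ ValuationSubring.centerOn_anti (hA.le_locZar M) hle
    have hW := hA.locSet_centerOn W.toValuationSubring_s19 hAW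
    rcases hPM.eq_or_lt with h | h
    · rw [h] at hW
      exact SetLike.coe_injective hW.symm
    · rw [hht _ inferInstance h, locSet_bot hA.1] at hW
      exact (hWtop (SetLike.coe_injective (hW.symm.trans Subring.coe_top.symm))).elim


def maximalLocalizations (hA : IsPruferOf A) : Set (Zar F) :=
  range fun M : MaximalSpectrum A => hA.locZar M.asIdeal

lemma aSet_maximalLocalizations (hA : IsPruferOf A) : aSet hA.maximalLocalizations = A := by
  rw [coe_eq_iInter_locSet A, aSet, maximalLocalizations, biInter_range]
  ext t
  simp only [mem_iInter]
  exact ⟨fun h M hM => h ⟨M, hM⟩, fun h M => h M.asIdeal M.isMaximal⟩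

lemma coe_mem_jSet (hA : IsPruferOf A) {x : A} (hx : ∀ M : Ideal A, M.IsMaximal → x ∈ M) :
    (x : F) ∈ jSet hA.maximalLocalizations := by
  rw [jSet, maximalLocalizations, biInter_range, mem_iInter]
  exact fun M => (hA.coe_mem_mIdeal_locZar_iff _ x).mpr (hx _ M.isMaximal)

variable {V : Zar F}

lemma le_of_mem_closure (hA : IsPruferOf A) (hV : V ∈ closure hA.maximalLocalizations) :
    A ≤ V.toValuationSubring_s19.toSubring := fun a ha =>
  show V ∈ {W : Zar F | a ∈ W.1} from
    closure_minimal (by rintro _ ⟨M, rfl⟩; exact le_locSub ha)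
      (Zar.isClopen_setOf_mem a).isClosed hV

lemma mem_centerOn_of_mem_closure (hA : IsPruferOf A) (hV : V ∈ closure hA.maximalLocalizations)
    {x : A} (hx : ∀ M : Ideal A, M.IsMaximal → x ∈ M) :
    x ∈ V.toValuationSubring_s19.centerOn A (hA.le_of_mem_closure hV) := by
  rw [ValuationSubring.mem_centerOn, SetLike.mem_coe.symm, ← Zar.mIdeal_eq_nonunits]
  exact closure_minimal (t := {W | (x : F) ∈ mIdeal W})
    (by rintro _ ⟨M, rfl⟩; exact (hA.coe_mem_mIdeal_locZar_iff _ x).mpr (hx _ M.isMaximal))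
    (Zar.isClopen_setOf_mem_mIdeal _).isClosed hV

lemma not_le_centerOn_of_mem_limPts (hA : IsPruferOf A) (hV : V ∈ limPts hA.maximalLocalizations)
    {M : Ideal A} [M.IsMaximal] (hM : ∃ I : Ideal A, I.FG ∧ I.radical = M) :
    ¬ M ≤ V.toValuationSubring_s19.centerOn A
      (hA.le_of_mem_closure (limPts_subset_closure hV)) := by
  intro hMV
  obtain ⟨I, ⟨s, rfl⟩, hrad⟩ := hM
  have hsM : ∀ a ∈ s, a ∈ M := fun a ha => hrad ▸ Ideal.le_radical (Ideal.subset_span ha)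
  set U := ⋂ a ∈ s, {W : Zar F | (a : F) ∈ mIdeal W}
  have hU : IsOpen U := isOpen_biInter_finset fun a _ => (Zar.isClopen_setOf_mem_mIdeal _).isOpen
  have hVU : V ∈ U := mem_iInter₂.mpr fun a ha => by
    change (a : F) ∈ mIdeal V
    rw [Zar.mIdeal_eq_nonunits, SetLike.mem_coe, ← ValuationSubring.mem_centerOn]
    exact hMV (hsM a ha)
  refine notMem_limPts_of_isOpen hU hVU ((finite_singleton (hA.locZar M)).subset ?_) hV
  rintro _ ⟨hNU, N, rfl⟩
  have hIN : Ideal.span (s : Set A) ≤ N.asIdeal := Ideal.span_le.mpr fun a ha =>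
    (hA.coe_mem_mIdeal_locZar_iff _ a).mp (mem_iInter₂.mp hNU a ha)
  have hMN : M = N.asIdeal := Ideal.IsMaximal.eq_of_le inferInstance N.isMaximal.ne_top
    (hrad ▸ (Ideal.radical_mono hIN).trans_eq N.isMaximal.isPrime.radical)
  subst hMN
  rfl

lemma exists_maximal_subset_of_mem_limPts (hA : IsPruferOf A) {x : A} (hx0 : x ≠ 0)
    (hx : ∀ M : Ideal A, M.IsMaximal → x ∈ M) (hV : V ∈ limPts hA.maximalLocalizations) :
    ∃ M : Ideal A, (M.IsMaximal ∧ ¬ ((M ≠ ⊥ ∧ ∀ P : Ideal A, P.IsPrime → P < M → P = ⊥) ∧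
      ∃ I : Ideal A, I.FG ∧ I.radical = M)) ∧ locSet A M ⊆ V.1 := by
  have hVcl := limPts_subset_closure hV
  set P := V.toValuationSubring_s19.centerOn A (hA.le_of_mem_closure hVcl)
  obtain ⟨M, hM, hPM⟩ := Ideal.exists_le_maximal P Ideal.IsPrime.ne_top'
  refine ⟨M, ⟨hM, fun ⟨⟨_, hht⟩, hrad⟩ => ?_⟩,
    (locSet_anti hPM).trans (locSet_centerOn_subset _ _)⟩
  have hxP : x ∈ P := hA.mem_centerOn_of_mem_closure hVcl hx
  have hPM' : P = M := hPM.eq_or_lt.resolve_right fun hlt =>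
    hx0 (by simpa [hht P inferInstance hlt] using hxP)
  exact hA.not_le_centerOn_of_mem_limPts hV hrad hPM'.ge

end IsPruferOf

theorem stmt19 (A : Subring F) (hP : IsPruferOf A)
    (hJac : ∃ x : A, x ≠ 0 ∧ ∀ M : Ideal A, M.IsMaximal → x ∈ M)
    (hfin : {M : Ideal A | M.IsMaximal ∧
      ¬ ((M ≠ ⊥ ∧ ∀ P : Ideal A, P.IsPrime → P < M → P = ⊥) ∧
         ∃ I : Ideal A, I.FG ∧ I.radical = M)}.Finite) :
    ∃ X : Set (Zar F), (A : Set F) = aSet X ∧ jSet X ≠ {0} ∧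
      {V ∈ X | ¬ RankOne V}.Finite ∧
      {V ∈ limPts X | ∀ W ∈ limPts X, W.1 ≤ V.1 → W = V}.Finite := by
  obtain ⟨x, hx0, hx⟩ := hJac
  refine ⟨hP.maximalLocalizations, hP.aSet_maximalLocalizations.symm, fun h => ?_, ?_, ?_⟩
  · have hx' : (x : F) ∈ ({0} : Set F) := h ▸ hP.coe_mem_jSet hx
    exact hx0 (Subtype.ext hx')
  · refine Finite.subset (hfin.biUnion fun M _ =>
      Subsingleton.finite (s := {V : Zar F | (V.1 : Set F) = locSet A M})
        fun V hV W hW => Subtype.ext (SetLike.coe_injective (hV.trans hW.symm))) ?_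
    rintro _ ⟨⟨M, rfl⟩, hV⟩
    exact mem_biUnion ⟨M.isMaximal, fun h => hV (hP.rankOne_locZar _ h.1.1 h.1.2)⟩ rfl
  · refine Finite.subset (hfin.biUnion' fun M hM =>
      (Zar.subsingleton_minimal_inter_le (limPts hP.maximalLocalizations)
        (@IsPruferOf.locZar _ _ _ hP M hM.1.isPrime)).finite) fun V hV => ?_
    obtain ⟨M, hM, hMV⟩ := hP.exists_maximal_subset_of_mem_limPts hx0 hx hV.1
    exact mem_iUnion₂.mpr ⟨M, hM, hV, hMV⟩
end
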